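/- arXiv:1811.05200 — 7 statements merged into one kernel-verified Lean document; each statement's English description precedes it below -/
import Mathlib

section
/- Let m be an even positive integer, let A ⊆ ℤ/mℤ with |A| = m/2, and suppose A + A ≠ ℤ/mℤ. Let X = (ℤ/mℤ) \ (A + A) and let H be the subgroup of ℤ/mℤ generated by the difference set X - X. Then H + A = A, i.e., A is a union of cosets of H. -/
open scoped Pointwise

theorem stabiliser_of_sumset (m : ℕ) [NeZero m] (hm : Even m) (A : Finset (ZMod m))
    (hA : A.card = m / 2) (h : A + A ≠ Finset.univ) :
    ((AddSubgroup.closure ((((A + A)ᶜ - (A + A)ᶜ : Finset (ZMod m))) : Set (ZMod m)) :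
        AddSubgroup (ZMod m)) : Set (ZMod m)) + (A : Set (ZMod m)) = (A : Set (ZMod m)) := by
  obtain ⟨k, hk⟩ := hm
  have hcardZ : Fintype.card (ZMod m) = m := ZMod.card m
  have hcompl : (Aᶜ).card = m / 2 := by
    rw [Finset.card_compl, hcardZ, hA]; omega
  -- key: if x, x' ∉ A + A and a ∈ A then (x - x') + a ∈ A
  have key : ∀ x ∈ (A + A)ᶜ, ∀ x' ∈ (A + A)ᶜ, ∀ a ∈ A, (x - x') + a ∈ A := by
    intro x hx x' hx' a ha
    rw [Finset.mem_compl] at hx hx'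
    have hsub : A.image (fun b => x - b) ⊆ Aᶜ := by
      intro c hc
      obtain ⟨b, hb, rfl⟩ := Finset.mem_image.mp hc
      rw [Finset.mem_compl]
      intro hmem
      have : (x - b) + b ∈ A + A := Finset.add_mem_add hmem hb
      rw [sub_add_cancel] at this
      exact hx this
    have hcard : (A.image (fun b => x - b)).card = A.card :=
      Finset.card_image_of_injective _ (fun u v huv => by
        have : x - u = x - v := huv
        simpa using sub_right_injective this)
    have heq : A.image (fun b => x - b) = Aᶜ :=
      Finset.eq_of_subset_of_card_le hsub (by rw [hcard, hA, hcompl])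
    by_contra hna
    have : (x - x') + a ∈ Aᶜ := Finset.mem_compl.mpr hna
    rw [← heq, Finset.mem_image] at this
    obtain ⟨b, hb, hbe⟩ := this
    have hbx : b = x' - a := by
      have := hbe
      have : x - b = x - (x' - a) := by rw [hbe]; ring
      exact sub_right_injective this
    have : b + a ∈ A + A := Finset.add_mem_add hb ha
    rw [hbx, sub_add_cancel] at this
    exact hx' this
  -- every generator stabilizes A
  have hstab : ∀ d ∈ ((A + A)ᶜ - (A + A)ᶜ : Finset (ZMod m)),
      ∀ a ∈ A, d + a ∈ A := by
    intro d hd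
    obtain ⟨x, hx, x', hx', rfl⟩ := Finset.mem_sub.mp hd
    exact key x hx x' hx'
  -- closure is contained in the stabilizer of A (as a set of translations)
  set S : AddSubgroup (ZMod m) :=
    AddAction.stabilizer (ZMod m) (A : Set (ZMod m)) with hS
  have hle : AddSubgroup.closure
      ((((A + A)ᶜ - (A + A)ᶜ : Finset (ZMod m))) : Set (ZMod m)) ≤ S := by
    rw [AddSubgroup.closure_le]
    intro d hd
    rw [SetLike.mem_coe, hS, AddAction.mem_stabilizer_iff]
    have hd' : d ∈ ((A + A)ᶜ - (A + A)ᶜ : Finset (ZMod m)) := by exact_mod_cast hd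
    have hsub : d +ᵥ (A : Set (ZMod m)) ⊆ (A : Set (ZMod m)) := by
      rintro z ⟨a, ha, rfl⟩
      exact hstab d hd' a ha
    -- equality by finiteness: translation preserves cardinality
    have : (d +ᵥ (A : Set (ZMod m))) = ((Finset.image (fun a => d + a) A : Finset (ZMod m)) : Set (ZMod m)) := by
      ext z
      constructor
      · rintro ⟨a, ha, rfl⟩
        exact Finset.mem_coe.mpr (Finset.mem_image.mpr ⟨a, ha, rfl⟩)
      · intro hz
        obtain ⟨a, ha, rfl⟩ := Finset.mem_image.mp (Finset.mem_coe.mp hz)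
        exact ⟨a, ha, rfl⟩
    rw [this]
    norm_cast
    apply Finset.eq_of_subset_of_card_le
    · intro z hz
      obtain ⟨a, ha, rfl⟩ := Finset.mem_image.mp hz
      exact hstab d hd' a ha
    · rw [Finset.card_image_of_injective _ (add_right_injective d)]
  -- conclude
  ext z
  constructor
  · rintro ⟨h', hh', a, ha, rfl⟩
    have hmem : h' ∈ S := hle hh'
    rw [hS, AddAction.mem_stabilizer_iff] at hmem
    have : h' + a ∈ h' +ᵥ (A : Set (ZMod m)) := ⟨a, ha, rfl⟩
    rwa [hmem] at this
  · intro hz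
    exact ⟨0, AddSubgroup.zero_mem _, z, hz, by simp⟩
end

section
/- Let m be an even positive integer and A ⊆ ℤ/mℤ with |A| = m/2 and A + A ≠ ℤ/mℤ. Then there exist an even positive divisor m' of m and an odd residue α ∈ ℤ/m'ℤ such that, writing φ : ℤ/mℤ → ℤ/m'ℤ for the canonical projection and A' = φ(A), B' = φ((ℤ/mℤ) \ A), one has A' + A' = B' + B' = (ℤ/m'ℤ) \ {α}, and A + A = {r ∈ ℤ/mℤ : φ(r) ≠ α}. -/
open scoped Pointwise

open Finset

private def shA {G : Type*} [AddCommGroup G] [DecidableEq G] (x : G) (A : Finset G) : Finset G :=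
  A.image (fun a => a + x)

private lemma shA_zero {G : Type*} [AddCommGroup G] [DecidableEq G] (A : Finset G) :
    shA (0 : G) A = A := by simp [shA]

private lemma shA_shA {G : Type*} [AddCommGroup G] [DecidableEq G] (x y : G) (A : Finset G) :
    shA y (shA x A) = shA (x + y) A := by
  rw [shA, shA, shA, Finset.image_image]
  apply Finset.image_congr
  intro a _
  simp only [Function.comp_apply]
  rw [add_assoc]

private lemma shA_nsmul {G : Type*} [AddCommGroup G] [DecidableEq G] {x : G} {A : Finset G}
    (h : shA x A = A) : ∀ k : ℕ, shA (k • x) A = A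
  | 0 => by simp [shA_zero]
  | (k+1) => by
      have ih := shA_nsmul h k
      rw [succ_nsmul, ← shA_shA, ih, h]

private lemma L1 {G : Type*} [AddCommGroup G] [DecidableEq G] [Fintype G] {A : Finset G}
    (hcard : Aᶜ.card = A.card) {r : G} (hr : r ∉ A + A) :
    A.image (fun a => r - a) = Aᶜ := by
  apply Finset.eq_of_subset_of_card_le
  · intro b hb
    simp only [Finset.mem_image] at hb
    obtain ⟨a, ha, rfl⟩ := hb
    simp only [Finset.mem_compl]
    intro hmem
    have : a + (r - a) = r := by abel
    exact hr (this ▸ Finset.add_mem_add ha hmem)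
  · rw [hcard, Finset.card_image_of_injective _ sub_right_injective]

theorem sumset_char (m : ℕ) [NeZero m] (hm : Even m) (A : Finset (ZMod m))
    (hA : A.card = m / 2) (h : A + A ≠ Finset.univ) :
    ∃ m' : ℕ, ∃ hdvd : m' ∣ m, 0 < m' ∧ Even m' ∧ ∃ α : ZMod m', ¬ Even α ∧
      ((↑(A.image (ZMod.castHom hdvd (ZMod m'))) + ↑(A.image (ZMod.castHom hdvd (ZMod m'))) :
          Set (ZMod m')) = {α}ᶜ) ∧
      ((↑(Aᶜ.image (ZMod.castHom hdvd (ZMod m'))) + ↑(Aᶜ.image (ZMod.castHom hdvd (ZMod m'))) :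
          Set (ZMod m')) = {α}ᶜ) ∧
      ((A + A : Finset (ZMod m)) : Set (ZMod m)) =
        {r : ZMod m | ZMod.castHom hdvd (ZMod m') r ≠ α} := by
  classical
  have hm0 : 0 < m := Nat.pos_of_ne_zero (NeZero.ne m)
  have hcard : Aᶜ.card = A.card := by
    rw [Finset.card_compl, hA, ZMod.card m]
    obtain ⟨k, hk⟩ := hm
    omega
  obtain ⟨c, hc⟩ : ∃ c, c ∉ A + A := by
    by_contra hall
    push_neg at hall
    exact h (Finset.eq_univ_iff_forall.mpr hall)
  have hB : A.image (fun a => c - a) = Aᶜ := L1 hcard hc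
  -- minimal positive period
  have Hex : ∃ t : ℕ, 0 < t ∧ shA ((t : ZMod m)) A = A :=
    ⟨m, hm0, by rw [ZMod.natCast_self]; exact shA_zero A⟩
  set m' := Nat.find Hex with hm'def
  have hm'pos : 0 < m' := (Nat.find_spec Hex).1
  have hm'per : shA ((m' : ZMod m)) A = A := (Nat.find_spec Hex).2
  have hdvd_per : ∀ t : ℕ, m' ∣ t → shA ((t : ZMod m)) A = A := by
    rintro t ⟨k, rfl⟩
    have h2 := shA_nsmul hm'per k
    have h3 : ((m' * k : ℕ) : ZMod m) = k • ((m' : ℕ) : ZMod m) := by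
      push_cast [nsmul_eq_mul]; ring
    rw [h3]; exact h2
  have hper_dvd : ∀ t : ℕ, shA ((t : ZMod m)) A = A → m' ∣ t := by
    intro t ht
    have h1 : shA (((m' * (t / m') : ℕ)) : ZMod m) A = A := hdvd_per _ ⟨_, rfl⟩
    have h2 : ((t : ℕ) : ZMod m)
        = ((m' * (t / m') : ℕ) : ZMod m) + ((t % m' : ℕ) : ZMod m) := by
      rw [← Nat.cast_add, Nat.div_add_mod]
    have hr : shA (((t % m' : ℕ)) : ZMod m) A = A := by
      have := ht
      rw [h2, ← shA_shA, h1] at this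
      exact this
    rcases Nat.eq_zero_or_pos (t % m') with h0 | hposr
    · exact Nat.dvd_of_mod_eq_zero h0
    · exact absurd ⟨hposr, hr⟩ (Nat.find_min Hex (Nat.mod_lt t hm'pos))
  have hdvd : m' ∣ m := hper_dvd m (by rw [ZMod.natCast_self]; exact shA_zero A)
  haveI : NeZero m' := ⟨hm'pos.ne'⟩
  set φ := ZMod.castHom hdvd (ZMod m') with hφdef
  have hφval : ∀ x : ZMod m, φ x = ((x.val : ℕ) : ZMod m') := by
    intro x
    conv_lhs => rw [← ZMod.natCast_rightInverse x]
    rw [map_natCast]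
  have hφ0 : ∀ x : ZMod m, φ x = 0 ↔ shA x A = A := by
    intro x
    have hx : ((x.val : ℕ) : ZMod m) = x := ZMod.natCast_rightInverse x
    rw [hφval, ZMod.natCast_eq_zero_iff]
    constructor
    · intro hd
      have := hdvd_per _ hd
      rwa [hx] at this
    · intro hs
      exact hper_dvd _ (by rwa [hx])
  set α := φ c with hαdef
  have hchar : ∀ r : ZMod m, r ∉ A + A ↔ φ r = α := by
    intro r
    constructor
    · intro hr
      have h1 : A.image (fun a => r - a) = Aᶜ := L1 hcard hr
      have h2 : A.image (fun a => r - a) = A.image (fun a => c - a) := h1.trans hB.symm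
      have h3 : (shA (c - r) A).image (fun b => c - b) = A.image (fun a => r - a) := by
        rw [shA, Finset.image_image]
        apply Finset.image_congr
        intro a _
        simp only [Function.comp_apply]
        ring
      have h4 : (shA (c - r) A).image (fun b => c - b) = A.image (fun b => c - b) := by
        rw [h3, h2]
      have h5 : shA (c - r) A = A := Finset.image_injective sub_right_injective h4
      have h6 : φ (c - r) = 0 := (hφ0 _).mpr h5
      rw [map_sub] at h6
      rw [hαdef]
      linear_combination -h6
    · intro hφr hmem
      obtain ⟨a, ha, b, hb, rfl⟩ := Finset.mem_add.mp hmem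
      have h6 : φ (c - (a + b)) = 0 := by
        rw [map_sub, hφr]; ring
      have h5 : shA (c - (a + b)) A = A := (hφ0 _).mp h6
      have hb' : b + (c - (a + b)) ∈ shA (c - (a + b)) A :=
        Finset.mem_image_of_mem _ hb
      rw [h5] at hb'
      have : c = a + (b + (c - (a + b))) := by ring
      exact hc (this ▸ Finset.add_mem_add ha hb')
  have hchar2 : ∀ r : ZMod m, r ∈ A + A ↔ φ r ≠ α := by
    intro r
    constructor
    · intro hr hφ
      exact (hchar r).mpr hφ hr
    · intro hne
      by_contra hr
      exact hne ((hchar r).mp hr)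
  have hsurj : ∀ y : ZMod m', ∃ r : ZMod m, φ r = y := by
    intro y
    refine ⟨((y.val : ℕ) : ZMod m), ?_⟩
    rw [map_natCast]
    exact ZMod.natCast_rightInverse y
  have hAset : (↑(A.image φ) + ↑(A.image φ) : Set (ZMod m')) = {α}ᶜ := by
    ext y
    simp only [Set.mem_add, Finset.coe_image, Set.mem_image, Finset.mem_coe,
      Set.mem_compl_iff, Set.mem_singleton_iff]
    constructor
    · rintro ⟨-, ⟨a, ha, rfl⟩, -, ⟨b, hb, rfl⟩, rfl⟩
      have hmem : a + b ∈ A + A := Finset.add_mem_add ha hb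
      have := (hchar2 _).mp hmem
      rwa [map_add] at this
    · intro hy
      obtain ⟨r, hr⟩ := hsurj y
      have hmem : r ∈ A + A := (hchar2 r).mpr (by rw [hr]; exact hy)
      obtain ⟨a, ha, b, hb, rfl⟩ := Finset.mem_add.mp hmem
      exact ⟨φ a, ⟨a, ha, rfl⟩, φ b, ⟨b, hb, rfl⟩, by rw [← hr, map_add]⟩
  have hBset : (↑(Aᶜ.image φ) + ↑(Aᶜ.image φ) : Set (ZMod m')) = {α}ᶜ := by
    ext y
    simp only [Set.mem_add, Finset.coe_image, Set.mem_image, Finset.mem_coe,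
      Set.mem_compl_iff, Set.mem_singleton_iff]
    constructor
    · rintro ⟨-, ⟨b₁, hb₁, rfl⟩, -, ⟨b₂, hb₂, rfl⟩, rfl⟩
      rw [← hB] at hb₁ hb₂
      obtain ⟨a₁, ha₁, rfl⟩ := Finset.mem_image.mp hb₁
      obtain ⟨a₂, ha₂, rfl⟩ := Finset.mem_image.mp hb₂
      have hmem : a₁ + a₂ ∈ A + A := Finset.add_mem_add ha₁ ha₂
      have hne := (hchar2 _).mp hmem
      rw [map_add] at hne
      intro he
      apply hne
      rw [map_sub, map_sub, ← hαdef] at he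
      linear_combination -he
    · intro hy
      have hy' : α + (α - y) ≠ α := by
        intro he
        apply hy
        have : α - y = 0 := by linear_combination he
        linear_combination -this
      obtain ⟨r, hr⟩ := hsurj (α + (α - y))
      have hmem : r ∈ A + A := (hchar2 r).mpr (by rw [hr]; exact hy')
      obtain ⟨a₁, ha₁, a₂, ha₂, rfl⟩ := Finset.mem_add.mp hmem
      have hb₁ : c - a₁ ∈ Aᶜ := hB ▸ Finset.mem_image_of_mem _ ha₁
      have hb₂ : c - a₂ ∈ Aᶜ := hB ▸ Finset.mem_image_of_mem _ ha₂
      refine ⟨φ (c - a₁), ⟨c - a₁, hb₁, rfl⟩, φ (c - a₂), ⟨c - a₂, hb₂, rfl⟩, ?_⟩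
      rw [map_add] at hr
      rw [map_sub, map_sub, ← hαdef]
      linear_combination -hr
  have hodd : ¬ Even α := by
    rintro ⟨k, hk⟩
    obtain ⟨r, hr⟩ := hsurj k
    by_cases hrA : r ∈ A
    · have hmem : r + r ∈ A + A := Finset.add_mem_add hrA hrA
      have h2 := (hchar2 _).mp hmem
      apply h2
      rw [map_add, hr, ← hk]
    · have hrB : r ∈ Aᶜ := Finset.mem_compl.mpr hrA
      have hmem : φ r + φ r ∈ (↑(Aᶜ.image φ) + ↑(Aᶜ.image φ) : Set (ZMod m')) :=
        Set.add_mem_add (Finset.mem_coe.mpr (Finset.mem_image_of_mem _ hrB))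
          (Finset.mem_coe.mpr (Finset.mem_image_of_mem _ hrB))
      rw [hBset] at hmem
      exact hmem (by rw [hr, ← hk]; exact Set.mem_singleton _)
  have heven : Even m' := by
    by_contra hodd'
    rw [Nat.not_even_iff_odd] at hodd'
    obtain ⟨k, hk⟩ := hodd'
    apply hodd
    refine ⟨((k + 1 : ℕ) : ZMod m') * α, ?_⟩
    have h1 : (((k + 1 : ℕ) : ZMod m') * α) + (((k + 1 : ℕ) : ZMod m') * α)
        = ((2 * (k + 1) : ℕ) : ZMod m') * α := by push_cast; ring
    have h2 : ((2 * (k + 1) : ℕ) : ZMod m') = ((m' : ℕ) : ZMod m') + 1 := by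
      rw [hk]; push_cast; ring
    rw [h1, h2, ZMod.natCast_self]
    ring
  have hlast : ((A + A : Finset (ZMod m)) : Set (ZMod m)) = {r : ZMod m | φ r ≠ α} := by
    ext r
    simp only [Finset.mem_coe, Set.mem_setOf_eq]
    exact hchar2 r
  exact ⟨m', hdvd, hm'pos, heven, α, hodd, hAset, hBset, hlast⟩
end

section
/- Let m' be an even positive integer, α ∈ ℤ/m'ℤ, and A' ⊆ ℤ/m'ℤ with |A'| = m'/2 and A' + A' = (ℤ/m'ℤ) \ {α}. Then α is odd, i.e., α is not represented by an even integer. -/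
open scoped Pointwise

theorem missing_residue_is_odd (m' : ℕ) [NeZero m'] (hm : Even m') (A' : Finset (ZMod m'))
    (hA : A'.card = m' / 2) (α : ZMod m') (h : A' + A' = {α}ᶜ) : ¬ Even α := by
  intro hα
  obtain ⟨β, hβ⟩ := hα
  obtain ⟨k, hk⟩ := hm
  have hmpos : 0 < m' := NeZero.pos m'
  have hkpos : 0 < k := by omega
  have hα_not : α ∉ A' + A' := by rw [h]; simp
  have key : ∀ x ∈ A', α - x ∉ A' := by
    intro x hx hx'
    exact hα_not (by simpa using Finset.add_mem_add hx hx')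
  have hβA : β ∉ A' := fun hb => key β hb (by rwa [hβ, add_sub_cancel_right])
  have hk0 : ((k : ZMod m')) + (k : ZMod m') = 0 := by
    rw [← Nat.cast_add, ← hk, ZMod.natCast_self]
  have hγ : ∃ γ : ZMod m', γ = β + (k : ZMod m') := ⟨_, rfl⟩
  obtain ⟨γ, hγ⟩ := hγ
  have hαγ : α - γ = γ := by linear_combination hβ - 2 * hγ - hk0
  have hγA : γ ∉ A' := fun hg => key γ hg (by rwa [hαγ])
  have hβγ : β ≠ γ := by
    intro e
    have : (k : ZMod m') = 0 := by
      have h2 : β = β + (k : ZMod m') := by rw [← hγ, ← e]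
      exact left_eq_add.mp h2
    exact absurd ((ZMod.natCast_eq_zero_iff k m').mp this)
      (by intro hd; exact absurd (Nat.le_of_dvd hkpos hd) (by omega))
  have hcardZ : Fintype.card (ZMod m') = m' := ZMod.card m'
  set B := A'.image (fun x => α - x) with hB
  have hBcard : B.card = A'.card := Finset.card_image_of_injective _ (sub_right_injective)
  have hBsub : B ⊆ A'ᶜ := by
    intro x hx
    rw [hB, Finset.mem_image] at hx
    obtain ⟨a, ha, rfl⟩ := hx
    simpa using key a ha
  have hβB : β ∉ B := by
    intro hb
    rw [hB, Finset.mem_image] at hb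
    obtain ⟨a, ha, hab⟩ := hb
    have : a = β := by linear_combination hβ - hab
    exact hβA (this ▸ ha)
  have hγB : γ ∉ B := by
    intro hb
    rw [hB, Finset.mem_image] at hb
    obtain ⟨a, ha, hab⟩ := hb
    have : a = γ := by linear_combination hαγ - hab
    exact hγA (this ▸ ha)
  have hins : insert β (insert γ B) ⊆ A'ᶜ := by
    intro x hx
    simp only [Finset.mem_insert] at hx
    rcases hx with rfl | rfl | hx
    · simpa using hβA
    · simpa using hγA
    · exact hBsub hx
  have hc1 : (insert β (insert γ B)).card = B.card + 2 := by
    rw [Finset.card_insert_of_notMem (by simp [hβγ, hβB]),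
      Finset.card_insert_of_notMem hγB]
  have hc2 : (A'ᶜ : Finset (ZMod m')).card = m' - m' / 2 := by
    rw [Finset.card_compl, hcardZ, hA]
  have := Finset.card_le_card hins
  rw [hc1, hc2, hBcard, hA] at this
  omega
end

section
/- Let p ∈ ℤ[z] be a polynomial of degree d ≥ 1 with positive leading coefficient a_d, and let b, c be integers with c ≥ 1. If m is an integer with m > c^d * d! * a_d, then for any α ∈ ℤ there exists i ∈ {0, 1, ..., d} such that p(b + i·c) ≢ α (mod m). -/
open Polynomial Finset fwdDiff

private lemma hd_eval_eq (p : Polynomial ℤ) (c : ℤ) (k : ℕ) (hk : p.natDegree ≤ k) :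
    (p.hasseDeriv k).eval c = p.coeff k := by
  have h0 : (p.hasseDeriv k).natDegree = 0 := by
    rw [Polynomial.natDegree_hasseDeriv]; omega
  rw [Polynomial.eval_eq_sum_range' (by omega : (p.hasseDeriv k).natDegree < 1)]
  simp [Polynomial.hasseDeriv_coeff]

private lemma step_deg (p : Polynomial ℤ) (c : ℤ) (n : ℕ) (hp : p.natDegree ≤ n + 1) :
    (Polynomial.taylor c p - p).natDegree ≤ n := by
  rw [Polynomial.natDegree_le_iff_coeff_eq_zero]
  intro N hN
  rw [Polynomial.coeff_sub, Polynomial.taylor_coeff, hd_eval_eq p c N (by omega), sub_self]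

private lemma step_coeff (p : Polynomial ℤ) (c : ℤ) (n : ℕ) (hp : p.natDegree ≤ n + 1) :
    (Polynomial.taylor c p - p).coeff n = (n + 1 : ℤ) * c * p.coeff (n + 1) := by
  rw [Polynomial.coeff_sub, Polynomial.taylor_coeff]
  have h1 : (p.hasseDeriv n).natDegree < 2 := by
    rw [Polynomial.natDegree_hasseDeriv]; omega
  rw [Polynomial.eval_eq_sum_range' h1]
  simp only [Finset.sum_range_succ, Polynomial.hasseDeriv_coeff, Finset.sum_range_one]
  rw [show 1 + n = n + 1 from by omega, Nat.choose_succ_self_right]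
  simp
  ring

private lemma fwdDiff_eval (c : ℤ) : ∀ (n : ℕ) (p : Polynomial ℤ), p.natDegree ≤ n → ∀ x : ℤ,
    (Δ_[c])^[n] (fun t => p.eval t) x = c ^ n * (n.factorial : ℤ) * p.coeff n := by
  intro n
  induction n with
  | zero =>
    intro p hp x
    obtain ⟨a, rfl⟩ := Polynomial.natDegree_eq_zero.mp (Nat.le_zero.mp hp)
    simp
  | succ n ih =>
    intro p hp x
    rw [Function.iterate_succ_apply]
    have h1 : Δ_[c] (fun t => p.eval t) = fun t => (Polynomial.taylor c p - p).eval t := by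
      funext t
      simp [fwdDiff, Polynomial.taylor_eval]
    rw [h1, ih _ (step_deg p c n hp), step_coeff p c n hp, Nat.factorial_succ]
    push_cast
    ring

theorem ap_escape (p : Polynomial ℤ) (hd : 1 ≤ p.natDegree)
    (hlead : 0 < p.leadingCoeff) (b c : ℤ) (hc : 1 ≤ c) (m : ℤ)
    (hm : c ^ p.natDegree * ((p.natDegree).factorial : ℤ) * p.leadingCoeff < m) (α : ℤ) :
    ∃ i : ℕ, i ≤ p.natDegree ∧ ¬ (p.eval (b + i * c) ≡ α [ZMOD m]) := by
  by_contra h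
  push_neg at h
  set d := p.natDegree with hdd
  set A : ℤ := c ^ d * (d.factorial : ℤ) * p.leadingCoeff with hA
  have hApos : 0 < A := by
    apply mul_pos (mul_pos (pow_pos (by omega) d) _) hlead
    exact_mod_cast d.factorial_pos
  -- the iterated forward difference identity
  have key : A = ∑ k ∈ range (d + 1), ((-1 : ℤ) ^ (d - k) * d.choose k) * p.eval (b + k * c) := by
    have := fwdDiff_iter_eq_sum_shift c (fun t => p.eval t) d b
    rw [fwdDiff_eval c d p le_rfl b] at this
    rw [hA, Polynomial.leadingCoeff, ← hdd, this]
    simp [zsmul_eq_mul]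
  -- m divides A - 0
  have hdvd : m ∣ A := by
    have hsum0 : ∑ k ∈ range (d + 1), ((-1 : ℤ) ^ (d - k) * d.choose k) * α = 0 := by
      rw [← Finset.sum_mul]
      have : ∑ k ∈ range (d + 1), ((-1 : ℤ) ^ (d - k) * d.choose k) = 0 := by
        have h2 : ∑ k ∈ range (d + 1), ((-1 : ℤ) ^ (d - k) * d.choose k)
            = (-1) ^ d * ∑ k ∈ range (d + 1), ((-1 : ℤ) ^ k * d.choose k) := by
          rw [Finset.mul_sum]
          apply Finset.sum_congr rfl
          intro k hk
          have hkd : k ≤ d := by simpa [Nat.lt_succ_iff] using hk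
          have hsgn : ((-1 : ℤ)) ^ d * (-1) ^ k = (-1) ^ (d - k) := by
            rw [← pow_add, show d + k = (d - k) + 2 * k by omega, pow_add, pow_mul]
            norm_num
          rw [← hsgn]
          ring
        rw [h2, Int.alternating_sum_range_choose_of_ne (by omega), mul_zero]
      rw [this, zero_mul]
    have : A - 0 = ∑ k ∈ range (d + 1),
        ((-1 : ℤ) ^ (d - k) * d.choose k) * (p.eval (b + k * c) - α) := by
      rw [key]
      conv_lhs => rw [show (0:ℤ) = ∑ k ∈ range (d + 1),
        ((-1 : ℤ) ^ (d - k) * d.choose k) * α from hsum0.symm]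
      rw [← Finset.sum_sub_distrib]
      apply Finset.sum_congr rfl
      intro k _
      ring
    have hdvd' : m ∣ A - 0 := by
      rw [this]
      apply Finset.dvd_sum
      intro k hk
      have hkd : k ≤ d := by simpa [Nat.lt_succ_iff] using hk
      exact ((h k hkd).symm.dvd).mul_left _
    simpa using hdvd'
  have := Int.le_of_dvd hApos hdvd
  omega
end

section
/- Let p ∈ ℤ[z] be a polynomial of degree d ≥ 1 with positive leading coefficient a_d. There exist positive integers M and N (depending only on p) such that for all integers m₁, m₂ > M, all residues α₁, α₂, and every interval I ⊆ ℕ of length N, there exists z ∈ I with p(z) ≢ α₁ (mod m₁) and p(z) ≢ α₂ (mod m₂). -/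
/-!
Colour each `z` of the interval by whether `p z ≡ α₁ [ZMOD m₁]`. If every `z` satisfied one of
the two congruences, van der Waerden's theorem (via Hales–Jewett) would give a progression
`b, b + s, …, b + d s` inside the interval on which `p` is constant modulo `m = m₁` or `m = m₂`.
The `d`-th forward difference of `p` with step `s` is the constant `a_d s^d d!`, an integer
combination of `p (b + i s) - α`, so `m ∣ a_d s^d d!`; but `0 < a_d s^d d! ≤ a_d N^d d! < m`.
-/

open Polynomial Finset Nat Combinatorics

theorem Combinatorics.Line.sum_val_apply {ι : Type*} [Fintype ι] {n : ℕ}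
    (l : Line (Fin (n + 1)) ι) (x : Fin (n + 1)) :
    ∑ i, (l x i : ℕ) = ∑ i, (l 0 i : ℕ) + #{i | l.idxFun i = none} * x := by
  have hcoord (i : ι) : (l x i : ℕ) = l 0 i + if l.idxFun i = none then (x : ℕ) else 0 := by
    cases h : l.idxFun i <;> simp [h]
  rw [sum_congr rfl fun i _ => hcoord i, sum_add_distrib, sum_ite, sum_const_zero, add_zero,
    sum_const, smul_eq_mul]

theorem exists_mono_arithProg_in_Ico (k : ℕ) (κ : Type*) [Finite κ] :
    ∃ N > 0, ∀ (C : ℕ → κ) (a : ℕ), ∃ b s c, 0 < s ∧ a ≤ b ∧ b + k * s < a + N ∧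
      ∀ i ≤ k, C (b + i * s) = c := by
  obtain ⟨ι, _, hι⟩ := Line.exists_mono_in_high_dimension (Fin (k + 1)) κ
  -- the map `v ↦ a + ∑ i, v i` sends the whole cube `ι → Fin (k + 1)` into `[a, a + k * |ι|]`
  refine ⟨k * Fintype.card ι + 1, Nat.succ_pos _, fun C a => ?_⟩
  obtain ⟨l, c, hl⟩ := hι fun v => C (a + ∑ i, (v i : ℕ))
  obtain ⟨i₀, hi₀⟩ := l.proper
  have hmoving : 0 < #{i | l.idxFun i = none} := card_pos.mpr ⟨i₀, by simpa using hi₀⟩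
  refine ⟨a + ∑ i, (l 0 i : ℕ), _, c, hmoving, Nat.le_add_right _ _, ?_, fun j hj => ?_⟩
  · have hlast : ∑ i, (l (Fin.last k) i : ℕ) ≤ k * Fintype.card ι := by
      simpa [mul_comm] using sum_le_sum fun i (_ : i ∈ univ) => Fin.is_le (l (Fin.last k) i)
    rw [l.sum_val_apply, Fin.val_last] at hlast
    lia
  · have hj' : C (a + ∑ i, (l ⟨j, Nat.lt_succ_of_le hj⟩ i : ℕ)) = c := hl _
    rwa [l.sum_val_apply, ← add_assoc, mul_comm] at hj'

theorem Polynomial.dvd_leadingCoeff_mul_factorial_of_dvd_eval {R : Type*} [CommRing R]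
    (P : R[X]) {m : R} (h : ∀ k ≤ P.natDegree, m ∣ P.eval (k : R)) :
    m ∣ P.leadingCoeff * P.natDegree ! := by
  have hΔ := congr_fun P.fwdDiff_iter_degree_eq_factorial 0
  rw [fwdDiff_iter_eq_sum_shift] at hΔ
  simp only [Pi.smul_apply, Pi.natCast_apply, smul_eq_mul, zero_add, nsmul_eq_mul, mul_one] at hΔ
  rw [← hΔ]
  refine dvd_sum fun k hk => ?_
  rw [zsmul_eq_mul]
  exact dvd_mul_of_dvd_right (h k (Nat.lt_succ_iff.mp (mem_range.mp hk))) _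

theorem Polynomial.dvd_leadingCoeff_mul_pow_mul_factorial_of_modEq (p : ℤ[X])
    (hd : 0 < p.natDegree) {s : ℤ} (hs : s ≠ 0) {b α m : ℤ}
    (h : ∀ i ≤ p.natDegree, p.eval (b + i * s) ≡ α [ZMOD m]) :
    m ∣ p.leadingCoeff * s ^ p.natDegree * p.natDegree ! := by
  set P := p.comp (C s * X + C b) - C α
  have hlin : (C s * X + C b).natDegree = 1 := natDegree_linear hs
  have hcomp : (p.comp (C s * X + C b)).natDegree = p.natDegree := by
    rw [natDegree_comp, hlin, mul_one]
  have hdeg : P.natDegree = p.natDegree := by rw [natDegree_sub_C, hcomp]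
  have hlc : P.leadingCoeff = p.leadingCoeff * s ^ p.natDegree := by
    rw [leadingCoeff_sub_of_degree_lt, leadingCoeff_comp (by rw [hlin]; exact one_ne_zero),
      leadingCoeff_linear hs]
    exact degree_lt_degree (by rw [natDegree_C, hcomp]; exact hd)
  rw [← hlc, ← hdeg]
  refine P.dvd_leadingCoeff_mul_factorial_of_dvd_eval fun k hk => ?_
  have := (h k (hdeg ▸ hk)).symm.dvd
  simpa [P, eval_comp, add_comm, mul_comm] using this

theorem interval_escape_two_moduli (p : Polynomial ℤ) (hd : 1 ≤ p.natDegree)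
    (hlead : 0 < p.leadingCoeff) :
    ∃ M N : ℕ, 0 < M ∧ 0 < N ∧
      ∀ m₁ m₂ : ℕ, M < m₁ → M < m₂ → ∀ α₁ α₂ : ℤ, ∀ a : ℕ,
        ∃ z ∈ Finset.Ico a (a + N),
          ¬ (p.eval (z : ℤ) ≡ α₁ [ZMOD (m₁ : ℤ)]) ∧
          ¬ (p.eval (z : ℤ) ≡ α₂ [ZMOD (m₂ : ℤ)]) := by
  set d := p.natDegree
  obtain ⟨N, hN, hAP⟩ := exists_mono_arithProg_in_Ico d Bool
  have hT : 0 < p.leadingCoeff * (N : ℤ) ^ d * (d ! : ℤ) := by positivity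
  obtain ⟨M, hM⟩ := Int.eq_ofNat_of_zero_le hT.le
  refine ⟨M, N, by omega, hN, fun m₁ m₂ hm₁ hm₂ α₁ α₂ a => ?_⟩
  by_contra! hcover
  obtain ⟨b, s, c, hs, hab, hbN, hmono⟩ :=
    hAP (fun z => decide (p.eval (z : ℤ) ≡ α₁ [ZMOD m₁])) a
  have hmem : ∀ i ≤ d, b + i * s ∈ Ico a (a + N) := fun i hi => by
    have := Nat.mul_le_mul_right s hi
    rw [mem_Ico]; omega
  obtain ⟨m, α, hm, hcong⟩ : ∃ (m : ℕ) (α : ℤ), M < m ∧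
      ∀ i ≤ d, p.eval ((b + i * s : ℕ) : ℤ) ≡ α [ZMOD m] := by
    cases c
    · exact ⟨m₂, α₂, hm₂, fun i hi => hcover _ (hmem i hi) (of_decide_eq_false (hmono i hi))⟩
    · exact ⟨m₁, α₁, hm₁, fun i hi => of_decide_eq_true (hmono i hi)⟩
  push_cast at hcong
  have hdvd := p.dvd_leadingCoeff_mul_pow_mul_factorial_of_modEq hd (by positivity) hcong
  have hsN : s ≤ N := by nlinarith
  have hm_le : (m : ℤ) ≤ p.leadingCoeff * (N : ℤ) ^ d * (d ! : ℤ) :=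
    calc (m : ℤ) ≤ p.leadingCoeff * (s : ℤ) ^ d * (d ! : ℤ) := Int.le_of_dvd (by positivity) hdvd
      _ ≤ _ := by gcongr
  omega
end

section
/- Let p(z) = a_d z^d + ... + a_0 ∈ ℤ[z] with d ≥ 1 and a_d > 0, and suppose there exists an even positive integer m, a partition ℤ/mℤ = A ⊔ B with |A| = |B| = m/2, and an odd α ∈ ℤ/mℤ such that A + A = B + B = (ℤ/mℤ) \ {α} and p(z) ≡ α (mod m) for all z ∈ ℕ. Define the colouring φ(x) = -1 iff x mod m ∈ A. Then there is no triple (x, y, z) of positive integers with x + y = p(z) and φ(x) = φ(y). -/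
open scoped Pointwise

theorem periodic_colouring_no_solutions (p : Polynomial ℤ) (hd : 1 ≤ p.natDegree)
    (hlead : 0 < p.leadingCoeff) (m : ℕ) [NeZero m] (hm : Even m)
    (A : Finset (ZMod m)) (hA : A.card = m / 2) (hB : Aᶜ.card = m / 2)
    (α : ZMod m) (hα : ¬ Even α)
    (hAA : A + A = ({α} : Finset (ZMod m))ᶜ) (hBB : Aᶜ + Aᶜ = ({α} : Finset (ZMod m))ᶜ)
    (hp : ∀ z : ℕ, 0 < z → ((p.eval (z : ℤ) : ℤ) : ZMod m) = α) :
    ∀ x y z : ℕ, 0 < x → 0 < y → 0 < z →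
      (((x : ZMod m) ∈ A) ↔ ((y : ZMod m) ∈ A)) →
      (x : ℤ) + (y : ℤ) ≠ p.eval (z : ℤ) := by
  intro x y z hx hy hz hxy heq
  have hsum : (x : ZMod m) + (y : ZMod m) = α := by
    have := hp z hz
    rw [← heq] at this
    push_cast at this
    exact this
  by_cases h : (x : ZMod m) ∈ A
  · have hy' : (y : ZMod m) ∈ A := hxy.mp h
    have : (x : ZMod m) + (y : ZMod m) ∈ A + A := Finset.add_mem_add h hy'
    rw [hAA, hsum] at this
    simp at this
  · have hy' : (y : ZMod m) ∉ A := fun hh => h (hxy.mpr hh)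
    have : (x : ZMod m) + (y : ZMod m) ∈ Aᶜ + Aᶜ :=
      Finset.add_mem_add (Finset.mem_compl.mpr h) (Finset.mem_compl.mpr hy')
    rw [hBB, hsum] at this
    simp at this
end

section
/- Let p(z) = a_d z^d + ... + a_0 ∈ ℤ[z] with d ≥ 2 and a_d > 0. For all sufficiently large n there is a 2-colouring of [n] = {1, ..., n} with at most O(n^{2/d²}) monochromatic solutions {x, y, z} to x + y = p(z). Specifically: let n₂ be minimal with p(n₂) > 2n and n₁ minimal with p(n₁) > 2(n₂ - 1); colour [1, n₁-1] ∪ [n₂, n] with colour 1 and [n₁, n₂-1] with colour -1. Then every monochromatic solution satisfies z ≤ n₁ - 1 and min{x, y} ≤ n₁ - 1, so the number of monochromatic solutions is at most 2n₁². -/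
/-!
A polynomial with positive leading coefficient is monotone on `ℕ` beyond some point `M`, and for
large `n` the thresholds `n₂` and then `n₁` both lie beyond `M`. Hence `p(n₂) > 2n ≥ x + y` rules
out `z ≥ n₂`, and `p(n₁) > 2(n₂ - 1)` rules out a solution coloured `-1`. In colour `1` with `z < n₁`, the bound
`p(z) ≤ 2(n₂ - 1) < x + y` when `x, y ≥ n₂` forces `min x y < n₁`. Such a solution is determined by
`z` and the smaller of `x, y`, which gives at most `2 n₁²` of them.
-/

open Polynomial Filter Finset

namespace Polynomial

theorem eventually_nonneg_eval_of_leadingCoeff_nonneg {P : ℝ[X]} (h : 0 ≤ P.leadingCoeff) :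
    ∀ᶠ x in atTop, 0 ≤ P.eval x := by
  rcases lt_or_ge 0 P.degree with hdeg | hdeg
  · exact (P.tendsto_atTop_of_leadingCoeff_nonneg hdeg h).eventually_ge_atTop 0
  · rw [eq_C_of_degree_le_zero hdeg] at h ⊢
    exact Eventually.of_forall fun _ => by simpa using h

theorem exists_monotoneOn_Ici_of_leadingCoeff_nonneg {P : ℝ[X]} (h : 0 ≤ P.leadingCoeff) :
    ∃ M : ℝ, MonotoneOn P.eval (Set.Ici M) := by
  have hderiv : 0 ≤ P.derivative.leadingCoeff := by
    rw [leadingCoeff_derivative]; positivity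
  obtain ⟨M, hM⟩ := (eventually_nonneg_eval_of_leadingCoeff_nonneg hderiv).exists_forall_of_atTop
  refine ⟨M, monotoneOn_of_deriv_nonneg (convex_Ici M) P.continuousOn P.differentiableOn ?_⟩
  intro x hx
  rw [interior_Ici] at hx
  rw [Polynomial.deriv]
  exact hM x hx.le

theorem exists_monotoneOn_Ici_eval_natCast {p : ℤ[X]} (h : 0 ≤ p.leadingCoeff) :
    ∃ M : ℕ, MonotoneOn (fun k : ℕ => p.eval (k : ℤ)) (Set.Ici M) := by
  have hinj : Function.Injective (Int.castRingHom ℝ) := Int.cast_injective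
  have hmap : 0 ≤ (p.map (Int.castRingHom ℝ)).leadingCoeff := by
    rw [leadingCoeff_map_of_injective hinj, eq_intCast]; exact_mod_cast h
  obtain ⟨M, hM⟩ := exists_monotoneOn_Ici_of_leadingCoeff_nonneg hmap
  refine ⟨⌈M⌉₊, fun a ha b hb hab => ?_⟩
  have hreal : eval ((a : ℤ) : ℝ) (p.map (Int.castRingHom ℝ)) ≤ eval ((b : ℤ) : ℝ) (p.map _) :=
    hM (Nat.ceil_le.1 ha) (Nat.ceil_le.1 hb) (Nat.cast_le.2 hab)
  simp only [eval_intCast_map, eq_intCast, Int.cast_le] at hreal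
  exact hreal

end Polynomial

theorem exists_le_of_lt_apply {α : Type*} [Preorder α] [IsDirected α (· ≤ ·)] [Nonempty α]
    (f : ℕ → α) (M : ℕ) : ∃ B : α, ∀ k, B < f k → M ≤ k := by
  obtain ⟨B, hB⟩ := ((Set.finite_Iio M).image f).bddAbove
  exact ⟨B, fun k hk => not_lt.1 fun hkM => (hB ⟨k, hkM, rfl⟩).not_gt hk⟩

theorem card_le_sq_of_forall_add_eq (s : Finset (ℕ × ℕ × ℕ)) (f : ℕ → ℤ) (m : ℕ)
    (hs : ∀ t ∈ s, (t.1 : ℤ) + t.2.1 = f t.2.2 ∧ t.1 < m ∧ t.2.2 < m) :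
    #s ≤ m ^ 2 := by
  rw [sq, ← card_range m, ← card_product]
  refine card_le_card_of_injOn (fun t => (t.1, t.2.2)) (fun t ht => ?_) fun t ht t' ht' htt' => ?_
  · simp only [coe_product, coe_range, Set.mem_prod, Set.mem_Iio]
    exact ⟨(hs t ht).2.1, (hs t ht).2.2⟩
  · obtain ⟨hx, hz⟩ := Prod.mk.inj htt'
    have hy : t.2.1 = t'.2.1 := by
      have h := (hs t ht).1
      have h' := (hs t' ht').1
      rw [hx, hz] at h
      omega
    exact Prod.ext hx (Prod.ext hy hz)

theorem card_le_of_forall_add_eq (s : Finset (ℕ × ℕ × ℕ)) (f : ℕ → ℤ) (m : ℕ)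
    (hs : ∀ t ∈ s, (t.1 : ℤ) + t.2.1 = f t.2.2 ∧ t.2.2 < m ∧ min t.1 t.2.1 < m) :
    #s ≤ 2 * m ^ 2 := by
  set swap : ℕ × ℕ × ℕ → ℕ × ℕ × ℕ := fun t => (t.2.1, t.1, t.2.2)
  have hswap : Function.Injective swap := fun t t' h => by
    simp only [swap, Prod.mk.injEq] at h
    exact Prod.ext h.2.1 (Prod.ext h.1 h.2.2)
  have hsplit : s ⊆ {t ∈ s | t.1 < m} ∪ {t ∈ s | t.2.1 < m} := fun t ht => by
    have hmin := (hs t ht).2.2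
    rw [min_lt_iff] at hmin
    simp only [mem_union, mem_filter]
    tauto
  have hfst : #{t ∈ s | t.1 < m} ≤ m ^ 2 :=
    card_le_sq_of_forall_add_eq _ f m fun t ht => by
      rw [mem_filter] at ht
      exact ⟨(hs t ht.1).1, ht.2, (hs t ht.1).2.1⟩
  have hsnd : #{t ∈ s | t.2.1 < m} ≤ m ^ 2 := by
    rw [← card_image_of_injective _ hswap]
    refine card_le_sq_of_forall_add_eq _ f m fun t' ht' => ?_
    obtain ⟨t, ht, rfl⟩ := mem_image.1 ht'
    rw [mem_filter] at ht
    exact ⟨by rw [add_comm]; exact (hs t ht.1).1, ht.2, (hs t ht.1).2.1⟩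
  calc #s ≤ #({t ∈ s | t.1 < m} ∪ {t ∈ s | t.2.1 < m}) := card_le_card hsplit
    _ ≤ #{t ∈ s | t.1 < m} + #{t ∈ s | t.2.1 < m} := card_union_le _ _
    _ ≤ 2 * m ^ 2 := by omega

section Monochromatic

variable {f : ℕ → ℤ} {M n n₁ n₂ x y z : ℕ}

theorem lt_of_monochromatic (hf : MonotoneOn f (Set.Ici M)) (hn₁ : M ≤ n₁) (hn₂ : M ≤ n₂)
    (hx : x ≤ n) (hy : y ≤ n) (h₂ : 2 * (n : ℤ) < f n₂) (h₁ : 2 * ((n₂ : ℤ) - 1) < f n₁)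
    (hsum : (x : ℤ) + y = f z) (hxy : (x < n₁ ∨ n₂ ≤ x) ↔ (y < n₁ ∨ n₂ ≤ y))
    (hyz : (y < n₁ ∨ n₂ ≤ y) ↔ (z < n₁ ∨ n₂ ≤ z)) :
    z < n₁ := by
  by_contra hz
  rcases le_or_gt n₂ z with hz₂ | hz₂
  · have hle : f n₂ ≤ f z := hf hn₂ (hn₂.trans hz₂) hz₂
    omega
  · have hle : f n₁ ≤ f z := hf hn₁ (hn₁.trans (not_lt.1 hz)) (not_lt.1 hz)
    omega

theorem min_lt_of_monochromatic (hz : z < n₁) (hsum : (x : ℤ) + y ≤ 2 * ((n₂ : ℤ) - 1))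
    (hxy : (x < n₁ ∨ n₂ ≤ x) ↔ (y < n₁ ∨ n₂ ≤ y))
    (hyz : (y < n₁ ∨ n₂ ≤ y) ↔ (z < n₁ ∨ n₂ ≤ z)) :
    min x y < n₁ := by
  omega

end Monochromatic

theorem few_monochromatic_solutions_colouring_general (p : Polynomial ℤ)
    (hlead : 0 < p.leadingCoeff) :
    ∃ N : ℕ, ∀ n : ℕ, N ≤ n → ∀ n₁ n₂ : ℕ,
      (0 < n₂ ∧ 2 * (n : ℤ) < p.eval (n₂ : ℤ) ∧
        (∀ k : ℕ, 0 < k → k < n₂ → p.eval (k : ℤ) ≤ 2 * (n : ℤ))) →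
      (0 < n₁ ∧ 2 * ((n₂ : ℤ) - 1) < p.eval (n₁ : ℤ) ∧
        (∀ k : ℕ, 0 < k → k < n₁ → p.eval (k : ℤ) ≤ 2 * ((n₂ : ℤ) - 1))) →
      ((∀ x y z : ℕ, x ∈ Finset.Icc 1 n → y ∈ Finset.Icc 1 n → z ∈ Finset.Icc 1 n →
          (x : ℤ) + (y : ℤ) = p.eval (z : ℤ) →
          ((x < n₁ ∨ n₂ ≤ x) ↔ (y < n₁ ∨ n₂ ≤ y)) →
          ((y < n₁ ∨ n₂ ≤ y) ↔ (z < n₁ ∨ n₂ ≤ z)) →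
          z < n₁ ∧ min x y < n₁) ∧
        ((Finset.Icc 1 n ×ˢ Finset.Icc 1 n ×ˢ Finset.Icc 1 n).filter
            (fun t => (t.1 : ℤ) + (t.2.1 : ℤ) = p.eval (t.2.2 : ℤ) ∧
              ((t.1 < n₁ ∨ n₂ ≤ t.1) ↔ (t.2.1 < n₁ ∨ n₂ ≤ t.2.1)) ∧
              ((t.2.1 < n₁ ∨ n₂ ≤ t.2.1) ↔ (t.2.2 < n₁ ∨ n₂ ≤ t.2.2)))).card
          ≤ 2 * n₁ ^ 2) := by
  obtain ⟨M, hM⟩ := exists_monotoneOn_Ici_eval_natCast hlead.le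
  obtain ⟨B₁, hB₁⟩ := exists_le_of_lt_apply (fun k : ℕ => p.eval (k : ℤ)) M
  obtain ⟨B₂, hB₂⟩ := exists_le_of_lt_apply (fun k : ℕ => p.eval (k : ℤ)) (max M (B₁.toNat + 1))
  refine ⟨B₂.toNat, fun n hn n₁ n₂ ⟨_, h₂, _⟩ ⟨_, h₁, h₁min⟩ => ?_⟩
  have hn₂ : max M (B₁.toNat + 1) ≤ n₂ := hB₂ n₂ (by omega)
  have hn₁ : M ≤ n₁ := hB₁ n₁ (by omega)
  have hsol : ∀ x y z : ℕ, x ∈ Icc 1 n → y ∈ Icc 1 n → z ∈ Icc 1 n →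
      (x : ℤ) + y = p.eval (z : ℤ) → ((x < n₁ ∨ n₂ ≤ x) ↔ (y < n₁ ∨ n₂ ≤ y)) → ((y < n₁ ∨ n₂ ≤ y) ↔ (z < n₁ ∨ n₂ ≤ z)) →
      z < n₁ ∧ min x y < n₁ := by
    intro x y z hx hy hz hsum hxy hyz
    rw [mem_Icc] at hx hy hz
    have hzn₁ := lt_of_monochromatic hM hn₁ (by omega) hx.2 hy.2 h₂ h₁ hsum hxy hyz
    exact ⟨hzn₁, min_lt_of_monochromatic hzn₁ (hsum.trans_le (h₁min z hz.1 hzn₁)) hxy hyz⟩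
  refine ⟨hsol, card_le_of_forall_add_eq _ (fun k => p.eval (k : ℤ)) n₁ fun t ht => ?_⟩
  simp only [mem_filter, mem_product] at ht
  obtain ⟨⟨hx, hy, hz⟩, hsum, hxy, hyz⟩ := ht
  exact ⟨hsum, hsol _ _ _ hx hy hz hsum hxy hyz⟩

theorem few_monochromatic_solutions_colouring (p : Polynomial ℤ) (hd : 2 ≤ p.natDegree)
    (hlead : 0 < p.leadingCoeff) :
    ∃ N : ℕ, ∀ n : ℕ, N ≤ n → ∀ n₁ n₂ : ℕ,
      (0 < n₂ ∧ 2 * (n : ℤ) < p.eval (n₂ : ℤ) ∧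
        (∀ k : ℕ, 0 < k → k < n₂ → p.eval (k : ℤ) ≤ 2 * (n : ℤ))) →
      (0 < n₁ ∧ 2 * ((n₂ : ℤ) - 1) < p.eval (n₁ : ℤ) ∧
        (∀ k : ℕ, 0 < k → k < n₁ → p.eval (k : ℤ) ≤ 2 * ((n₂ : ℤ) - 1))) →
      ((∀ x y z : ℕ, x ∈ Finset.Icc 1 n → y ∈ Finset.Icc 1 n → z ∈ Finset.Icc 1 n →
          (x : ℤ) + (y : ℤ) = p.eval (z : ℤ) →
          ((x < n₁ ∨ n₂ ≤ x) ↔ (y < n₁ ∨ n₂ ≤ y)) →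
          ((y < n₁ ∨ n₂ ≤ y) ↔ (z < n₁ ∨ n₂ ≤ z)) →
          z < n₁ ∧ min x y < n₁) ∧
        ((Finset.Icc 1 n ×ˢ Finset.Icc 1 n ×ˢ Finset.Icc 1 n).filter
            (fun t => (t.1 : ℤ) + (t.2.1 : ℤ) = p.eval (t.2.2 : ℤ) ∧
              ((t.1 < n₁ ∨ n₂ ≤ t.1) ↔ (t.2.1 < n₁ ∨ n₂ ≤ t.2.1)) ∧
              ((t.2.1 < n₁ ∨ n₂ ≤ t.2.1) ↔ (t.2.2 < n₁ ∨ n₂ ≤ t.2.2)))).card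
          ≤ 2 * n₁ ^ 2) :=
  few_monochromatic_solutions_colouring_general p hlead
end
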